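/- arXiv:1306.0062 — 6 statements merged into one kernel-verified Lean document; each statement's English description precedes it below -/
import Mathlib

section
/- Generalized Cauchy–Binet, coefficient form: Let F and G be n×m matrices over a commutative ring and let 0 ≤ k ≤ m. Then p_k(Fᵀ·G) = Σ_{(I,J)} det(F_{I,J})·det(G_{I,J}), where the sum runs over all pairs (I,J) with I a k-element subset of the row indices {1,…,n} and J a k-element subset of the column indices {1,…,m}. Equivalently, (−1)^k times the coefficient of x^{m−k} in the characteristic polynomial of the m×m matrix Fᵀ·G equals this sum of products of corresponding k×k minors of F and G. -/
open Matrix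

/-- The minor of an `n × m` matrix `F` given by a `k`-element set `I` of row indices and a
`k`-element set `J` of column indices: the determinant of the `k × k` submatrix formed by the
rows in `I` and the columns in `J`, taken in increasing order. For `k = 0` it equals `1`. -/
def Matrix.minorOn {R : Type*} [CommRing R] {n m k : ℕ} (F : Matrix (Fin n) (Fin m) R)
    (I : {s : Finset (Fin n) // s.card = k}) (J : {s : Finset (Fin m) // s.card = k}) : R :=
  (F.submatrix (I.1.orderEmbOfFin I.2) (J.1.orderEmbOfFin J.2)).det

/-!
By the principal-minor expansion of the characteristic polynomial, `(-1)^k` times the coefficient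
of `x^(m-k)` in `charpoly (Fᵀ * G)` is the sum of the principal `k × k` minors of `Fᵀ * G`. The
principal minor on `J` is `det ((F_{·,J})ᵀ * G_{·,J})`, which the Cauchy–Binet formula expands as
`∑ I, det F_{I,J} * det G_{I,J}`.

For Cauchy–Binet, expanding `det (A * B)` multilinearly in the rows gives a sum over all maps
`f : Fin k → ι`; non-injective `f` contribute nothing, and an injective `f` factors uniquely as
the increasing enumeration of its image composed with a permutation (sorting `f`).
-/

open Finset Equiv

namespace Matrix

variable {R : Type*} [CommRing R]

theorem det_mul_eq_sum_prod_mul_det_submatrix {m ι : Type*} [Fintype m] [DecidableEq m]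
    [Fintype ι] (A : Matrix m ι R) (B : Matrix ι m R) :
    (A * B).det = ∑ f : m → ι, (∏ i, A i (f i)) * (B.submatrix f id).det := by
  have hrows : A * B = fun i => ∑ j, A i j • B j := by
    ext i j; simp [mul_apply]
  rw [hrows]
  exact (detRowAlternating.toMultilinearMap.map_sum _).trans
    (sum_congr rfl fun f _ => detRowAlternating.map_smul_univ _ _)

section CauchyBinet

variable {ι : Type*} [LinearOrder ι] {k : ℕ}

theorem _root_.Finset.orderEmbOfFin_comp_perm_injective :
    Function.Injective fun p : {s : Finset ι // s.card = k} × Perm (Fin k) =>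
      p.1.1.orderEmbOfFin p.1.2 ∘ p.2 := by
  rintro ⟨⟨I, hI⟩, σ⟩ ⟨⟨I', hI'⟩, σ'⟩ h
  have hrange : (I : Set ι) = I' := by
    simpa only [Set.range_comp, σ.surjective.range_eq, σ'.surjective.range_eq, Set.image_univ,
      range_orderEmbOfFin] using congrArg Set.range h
  obtain rfl : I = I' := coe_injective hrange
  exact Prod.ext rfl (Equiv.ext fun i => (I.orderEmbOfFin hI).injective (congrFun h i))

theorem _root_.Finset.exists_orderEmbOfFin_comp_perm_eq {f : Fin k → ι}
    (hf : Function.Injective f) :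
    ∃ p : {s : Finset ι // s.card = k} × Perm (Fin k), p.1.1.orderEmbOfFin p.1.2 ∘ p.2 = f := by
  classical
  have hcard : (univ.image f).card = k := by simp [card_image_of_injective _ hf]
  have hsorted : f ∘ Tuple.sort f = (univ.image f).orderEmbOfFin hcard :=
    orderEmbOfFin_unique hcard (fun i => mem_image_of_mem f (mem_univ _))
      ((Tuple.monotone_sort f).strictMono_of_injective (hf.comp (Tuple.sort f).injective))
  refine ⟨(⟨univ.image f, hcard⟩, (Tuple.sort f)⁻¹), ?_⟩
  ext i
  simp [← hsorted]

theorem det_mul_eq_sum_det_submatrix_mul_det_submatrix [Fintype ι]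
    (A : Matrix (Fin k) ι R) (B : Matrix ι (Fin k) R) :
    (A * B).det = ∑ I : {s : Finset ι // s.card = k},
      (A.submatrix id (I.1.orderEmbOfFin I.2)).det *
        (B.submatrix (I.1.orderEmbOfFin I.2) id).det := by
  classical
  set e : {s : Finset ι // s.card = k} × Perm (Fin k) → Fin k → ι :=
    fun p => p.1.1.orderEmbOfFin p.1.2 ∘ p.2
  have hvanish : ∀ f ∈ univ, (∏ i, A i (f i)) * (B.submatrix f id).det ≠ 0 →
      Function.Injective f := by
    intro f _ hf
    by_contra hinj
    obtain ⟨i, j, hij, hne⟩ := Function.not_injective_iff.mp hinj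
    exact hf (by rw [det_zero_of_row_eq hne (by ext; simp [hij]), mul_zero])
  have himage : univ.image e = univ.filter Function.Injective := by
    ext f
    simp only [mem_image, mem_univ, true_and, mem_filter]
    exact ⟨fun ⟨p, hp⟩ => hp ▸ (p.1.1.orderEmbOfFin p.1.2).injective.comp p.2.injective,
      exists_orderEmbOfFin_comp_perm_eq⟩
  rw [det_mul_eq_sum_prod_mul_det_submatrix, ← sum_filter_of_ne hvanish, ← himage,
    sum_image (orderEmbOfFin_comp_perm_injective.injOn), Fintype.sum_prod_type]
  refine sum_congr rfl fun I _ => ?_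
  rw [← det_transpose (A.submatrix _ _), det_apply, sum_mul]
  refine sum_congr rfl fun σ _ => ?_
  rw [show B.submatrix (e (I, σ)) id = (B.submatrix (I.1.orderEmbOfFin I.2) id).submatrix σ id
    from rfl, det_permute, Units.smul_def, zsmul_eq_mul]
  simp only [transpose_apply, submatrix_apply, id, Function.comp_apply]
  ring

end CauchyBinet

theorem det_submatrix_orderEmbOfFin {α : Type*} [LinearOrder α] (M : Matrix α α R)
    (s : Finset α) {k : ℕ} (h : s.card = k) :
    (M.submatrix (s.orderEmbOfFin h) (s.orderEmbOfFin h)).det =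
      (M.submatrix (Subtype.val : s → α) Subtype.val).det :=
  det_submatrix_equiv_self (s.orderIsoOfFin h).toEquiv (M.submatrix Subtype.val Subtype.val)

theorem neg_one_pow_mul_charpoly_coeff_eq_sum_det_submatrix {α : Type*} [Fintype α]
    [LinearOrder α] (M : Matrix α α R) {k : ℕ} (hk : k ≤ Fintype.card α) :
    (-1) ^ k * M.charpoly.coeff (Fintype.card α - k) =
      ∑ J : {s : Finset α // s.card = k},
        (M.submatrix (J.1.orderEmbOfFin J.2) (J.1.orderEmbOfFin J.2)).det := by
  rw [charpoly_coeff_eq_sum_minors M k hk, ← mul_assoc, ← pow_add, Even.neg_one_pow ⟨k, rfl⟩,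
    one_mul, sum_subtype _ fun _ => mem_powersetCard_univ]
  exact sum_congr rfl fun J _ => (det_submatrix_orderEmbOfFin M J.1 J.2).symm

end Matrix

/-- Generalized Cauchy–Binet, coefficient form: for `n × m` matrices `F, G` over a commutative
ring and `0 ≤ k ≤ m`, the coefficient `p_k = (-1)^k ⬝ [x^{m-k}] charpoly(Fᵀ G)` equals the sum
over all pairs `(I, J)` of `k`-element subsets of rows and columns of the products of the
corresponding `k × k` minors of `F` and `G`. -/
theorem generalized_cauchy_binet_coeff {R : Type*} [CommRing R] {n m : ℕ}
    (F G : Matrix (Fin n) (Fin m) R) (k : ℕ) (hk : k ≤ m) :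
    (-1 : R) ^ k * (Fᵀ * G).charpoly.coeff (m - k) =
      ∑ I : {s : Finset (Fin n) // s.card = k}, ∑ J : {s : Finset (Fin m) // s.card = k},
        F.minorOn I J * G.minorOn I J := by
  have hprincipal := neg_one_pow_mul_charpoly_coeff_eq_sum_det_submatrix (Fᵀ * G)
    (hk.trans_eq (Fintype.card_fin m).symm)
  rw [Fintype.card_fin] at hprincipal
  rw [hprincipal, sum_comm]
  refine sum_congr rfl fun J _ => ?_
  rw [submatrix_mul _ _ _ id _ Function.bijective_id, ← transpose_submatrix,
    det_mul_eq_sum_det_submatrix_mul_det_submatrix]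
  refine sum_congr rfl fun I _ => ?_
  rw [← transpose_submatrix, det_transpose]
  rfl
end

section
/- Generalized Cauchy–Binet, polynomial form: Let F and G be n×m matrices over a commutative ring R. Then for every z ∈ R, det(1 + z·Fᵀ·G) = Σ_P z^{|P|}·det(F_P)·det(G_P), where the sum runs over all patterns P = (I,J) of every size k = 0,1,…,m (I a k-subset of rows, J a k-subset of columns), and the empty pattern |P| = 0 contributes 1 to the sum. -/
/-! Expanding `det (1 + z • M)` multilinearly in the rows gives `∑_J z ^ |J| • det M_{J,J}`,
the sum over principal minors. For `M = Fᵀ * G` the principal submatrix on `J` is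
`(F_{·,J})ᵀ * G_{·,J}`, and Cauchy–Binet evaluates its determinant as
`∑_I det F_{I,J} * det G_{I,J}`.

Cauchy–Binet in turn comes from expanding `det (Aᵀ * B)` multilinearly as
`∑_r (∏_j A_{r j, j}) * det B_r` over row selections `r`. A non-injective `r` repeats a row of
`B`, and an injective one is uniquely the increasing enumeration of its image `I` composed with
a permutation `σ`; the sign of `σ` produced by `det B_r` reassembles the `A`-factors into
`det A_I`. -/

open Matrix

open Finset Equiv

namespace Matrix

variable {R : Type*} [CommRing R]

open Polynomial in
theorem det_one_add_smul_eq_sum_principal_minors {ι : Type*} [Fintype ι] [DecidableEq ι]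
    (M : Matrix ι ι R) (z : R) :
    (1 + z • M).det = ∑ k ∈ range (Fintype.card ι + 1),
      z ^ k * ∑ s ∈ univ.powersetCard k,
        (M.submatrix (Subtype.val : s → ι) Subtype.val).det := by
  have heval : (1 + z • M).det = ((1 + (X : R[X]) • M.map C).det).eval z := by
    rw [← coe_evalRingHom, RingHom.map_det]
    congr 1
    ext i j
    simp only [RingHom.mapMatrix_apply, map_apply, add_apply, smul_apply, smul_eq_mul,
      coe_evalRingHom, eval_add, eval_mul, eval_X, eval_C]
    rw [one_apply, one_apply]
    split_ifs <;> simp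
  have hdeg : ((1 + (X : R[X]) • M.map C).det).natDegree < Fintype.card ι + 1 := by
    rw [add_comm, ← Matrix.map_one C (map_zero C) (map_one C)]
    exact Nat.lt_succ_of_le (natDegree_det_X_add_C_le _ _)
  rw [heval, eval_eq_sum_range' hdeg]
  refine sum_congr rfl fun k _ => ?_
  rw [coeff_det_one_add_X_smul_eq_sum_minors, mul_comm]

theorem det_submatrix_subtype_eq_det_submatrix_orderEmbOfFin {ι : Type*} [LinearOrder ι]
    (M : Matrix ι ι R) (s : Finset ι) {k : ℕ} (h : s.card = k) :
    (M.submatrix (Subtype.val : s → ι) Subtype.val).det =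
      (M.submatrix (s.orderEmbOfFin h) (s.orderEmbOfFin h)).det :=
  (det_submatrix_equiv_self (s.orderIsoOfFin h).toEquiv _).symm

section
variable {ι κ : Type*} [Fintype ι] [Fintype κ] [DecidableEq κ]

theorem det_transpose_mul_eq_sum (A B : Matrix ι κ R) :
    (Aᵀ * B).det = ∑ r : κ → ι, (∏ j, A (r j) j) * (B.submatrix r id).det := by
  have hrows :
      (Aᵀ * B).det = detRowAlternating.toMultilinearMap (fun j => ∑ i, A i j • B i) := by
    congr 1
    ext j l
    simp [mul_apply, Finset.sum_apply]
  rw [hrows, MultilinearMap.map_sum]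
  refine sum_congr rfl fun r _ => ?_
  rw [MultilinearMap.map_smul_univ, smul_eq_mul]
  rfl

theorem sum_perm_prod_mul_det_submatrix (A B : Matrix κ κ R) :
    ∑ σ : Perm κ, (∏ j, A (σ j) j) * (B.submatrix σ id).det = A.det * B.det := by
  simp_rw [det_permute, det_apply' A, sum_mul]
  refine sum_congr rfl fun σ _ => ?_
  ring

end

section
variable {ι : Type*} [LinearOrder ι] {k : ℕ}

variable (k) in
def subsetPermEmbedding (p : {s : Finset ι // s.card = k} × Perm (Fin k)) : Fin k ↪ ι :=
  p.2.toEmbedding.trans (p.1.1.orderEmbOfFin p.1.2).toEmbedding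

theorem range_subsetPermEmbedding (p : {s : Finset ι // s.card = k} × Perm (Fin k)) :
    Set.range (subsetPermEmbedding k p) = p.1.1 := by
  change Set.range (p.1.1.orderEmbOfFin p.1.2 ∘ p.2) = p.1.1
  rw [Set.range_comp, p.2.range_eq_univ, Set.image_univ, range_orderEmbOfFin]

theorem subsetPermEmbedding_injective : (subsetPermEmbedding (ι := ι) k).Injective := by
  rintro ⟨⟨s, hs⟩, σ⟩ ⟨⟨t, ht⟩, τ⟩ h
  have hst : s = t := by
    simpa [range_subsetPermEmbedding] using congrArg (fun e : Fin k ↪ ι => Set.range e) h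
  subst hst
  refine Prod.ext rfl (Equiv.ext fun j => (s.orderEmbOfFin hs).injective ?_)
  exact DFunLike.congr_fun h j

theorem subsetPermEmbedding_bijective [Fintype ι] :
    (subsetPermEmbedding (ι := ι) k).Bijective := by
  rw [Fintype.bijective_iff_injective_and_card]
  refine ⟨subsetPermEmbedding_injective, ?_⟩
  simp [Nat.descFactorial_eq_factorial_mul_choose, mul_comm, Fintype.card_perm]

theorem det_transpose_mul_eq_sum_det_mul_det [Fintype ι] (A B : Matrix ι (Fin k) R) :
    (Aᵀ * B).det = ∑ I : {s : Finset ι // s.card = k},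
      (A.submatrix (I.1.orderEmbOfFin I.2) id).det *
        (B.submatrix (I.1.orderEmbOfFin I.2) id).det := by
  have hvanish : ∀ r ∉ Set.range fun p => ⇑(subsetPermEmbedding k p),
      (∏ j, A (r j) j) * (B.submatrix r id).det = 0 := by
    intro r hr
    have hr : ¬ r.Injective := fun hinj => by
      obtain ⟨p, hp⟩ := subsetPermEmbedding_bijective.surjective ⟨r, hinj⟩
      exact hr ⟨p, congrArg DFunLike.coe hp⟩
    obtain ⟨a, b, hab, hne⟩ := Function.not_injective_iff.mp hr
    exact mul_eq_zero_of_right _ (det_zero_of_row_eq hne (congrArg B hab))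
  rw [det_transpose_mul_eq_sum, ← Fintype.sum_of_injective _
    (DFunLike.coe_injective.comp subsetPermEmbedding_injective) _ _ hvanish (fun _ => rfl),
    Fintype.sum_prod_type]
  refine sum_congr rfl fun I _ => ?_
  rw [← sum_perm_prod_mul_det_submatrix]
  rfl

end

end Matrix

/-- Generalized Cauchy–Binet, polynomial form: for `n × m` matrices `F, G` over a commutative
ring `R` and any `z ∈ R`, `det(1 + z Fᵀ G) = Σ_P z^{|P|} det(F_P) det(G_P)`, summing over all
patterns `P = (I, J)` of every size `k = 0, 1, …, m`; the empty pattern contributes `1`. -/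
theorem generalized_cauchy_binet_poly {R : Type*} [CommRing R] {n m : ℕ}
    (F G : Matrix (Fin n) (Fin m) R) (z : R) :
    (1 + z • (Fᵀ * G)).det =
      ∑ k ∈ Finset.range (m + 1), z ^ k *
        ∑ I : {s : Finset (Fin n) // s.card = k}, ∑ J : {s : Finset (Fin m) // s.card = k},
          F.minorOn I J * G.minorOn I J := by
  rw [det_one_add_smul_eq_sum_principal_minors, Fintype.card_fin]
  refine sum_congr rfl fun k _ => ?_
  rw [sum_comm, sum_subtype _ (p := fun s => s.card = k) (fun s => by simp [mem_powersetCard])]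
  refine congrArg (z ^ k * ·) (sum_congr rfl fun J _ => ?_)
  rw [det_submatrix_subtype_eq_det_submatrix_orderEmbOfFin _ _ J.2,
    submatrix_mul _ _ _ _ _ Function.bijective_id, ← transpose_submatrix,
    det_transpose_mul_eq_sum_det_mul_det]
  rfl
end

section
/- Let F and G be n×m matrices over a commutative ring. Then det(1 + Fᵀ·G) = Σ_P det(F_P)·det(G_P), where the sum runs over all patterns P = (I,J) of every size k = 0,1,…,m (I a k-subset of the rows, J a k-subset of the columns), the empty pattern contributing 1. -/
/-!
Expanding `det (1 + A)` multilinearly in the rows writes it as the sum of all principal minors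
`det A_{J,J}`. For `A = Fᵀ G` the principal minor on a column set `J` is `det (F_{·,J}ᵀ G_{·,J})`,
which the Cauchy–Binet formula expands as `∑_I det F_{I,J} · det G_{I,J}`.
-/

open Matrix

open Finset

section Minors

variable {R : Type*} [CommRing R]

theorem Matrix.det_one_add_eq_sum_det_submatrix {ι : Type*} [Fintype ι] [DecidableEq ι]
    (A : Matrix ι ι R) :
    (1 + A).det = ∑ s : Finset ι, (A.submatrix ((↑) : s → ι) (↑)).det := by
  rw [add_comm]
  change detRowAlternating (A.row + (1 : Matrix ι ι R).row) = _
  rw [detRowAlternating.map_add_univ]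
  exact sum_congr rfl fun s _ => det_piecewise_one_eq_submatrix_det A s

theorem Matrix.det_mul_eq_sum_prod_mul_det_submatrix_s2 {κ ι : Type*} [Fintype κ] [DecidableEq κ]
    [Fintype ι] (A : Matrix κ ι R) (B : Matrix ι κ R) :
    (A * B).det = ∑ r : κ → ι, (∏ j, A j (r j)) * (B.submatrix r id).det := by
  have hrows : (A * B).row = fun j => ∑ i, A j i • B.row i := by
    ext j l
    simp [mul_apply, Finset.sum_apply]
  change detRowAlternating (A * B).row = _
  rw [hrows]
  refine (detRowAlternating.toMultilinearMap.map_sum fun j i => A j i • B.row i).trans ?_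
  exact sum_congr rfl fun r _ => detRowAlternating.toMultilinearMap.map_smul_univ _ _

variable {ι : Type*} [LinearOrder ι] {k : ℕ}

theorem Function.Injective.exists_orderEmbOfFin_comp_perm_eq {r : Fin k → ι}
    (hr : Function.Injective r) :
    ∃ (h : (univ.image r).card = k) (σ : Equiv.Perm (Fin k)),
      (univ.image r).orderEmbOfFin h ∘ σ = r := by
  have hcard : (univ.image r).card = k := by simp [card_image_of_injective _ hr]
  have hsorted : r ∘ Tuple.sort r = (univ.image r).orderEmbOfFin hcard :=
    orderEmbOfFin_unique hcard (fun j => mem_image_of_mem r (mem_univ _))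
      ((Tuple.monotone_sort r).strictMono_of_injective (hr.comp (Tuple.sort r).injective))
  refine ⟨hcard, (Tuple.sort r)⁻¹, ?_⟩
  rw [← hsorted]
  ext j
  simp

theorem Finset.sum_filter_injective_eq_sum_orderEmbOfFin_comp_perm [Fintype ι]
    {M : Type*} [AddCommMonoid M] (f : (Fin k → ι) → M) :
    ∑ r with Function.Injective r, f r =
      ∑ I : {s : Finset ι // s.card = k}, ∑ σ : Equiv.Perm (Fin k),
        f (I.1.orderEmbOfFin I.2 ∘ σ) := by
  rw [← Fintype.sum_prod_type']
  symm
  refine sum_bij (fun p _ => p.1.1.orderEmbOfFin p.1.2 ∘ p.2) ?_ ?_ ?_ (fun _ _ => rfl)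
  · intro p _
    simpa using (p.1.1.orderEmbOfFin p.1.2).injective.comp p.2.injective
  · rintro ⟨I, σ⟩ - ⟨J, τ⟩ - h
    have hIJ : I = J := by
      have hrange := congrArg Set.range h
      simp only [EquivLike.range_comp, range_orderEmbOfFin] at hrange
      exact Subtype.ext (mod_cast hrange)
    subst hIJ
    simp only [Prod.mk.injEq, true_and]
    exact Equiv.ext fun j => (I.1.orderEmbOfFin I.2).injective (congrFun h j)
  · intro r hr
    obtain ⟨h, σ, hσ⟩ := (mem_filter.1 hr).2.exists_orderEmbOfFin_comp_perm_eq
    exact ⟨(⟨_, h⟩, σ), mem_univ _, hσ⟩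

variable [Fintype ι]

theorem Matrix.det_one_add_eq_sum_det_submatrix_orderEmbOfFin (A : Matrix ι ι R) :
    (1 + A).det = ∑ k ∈ range (Fintype.card ι + 1), ∑ s : {s : Finset ι // s.card = k},
      (A.submatrix (s.1.orderEmbOfFin s.2) (s.1.orderEmbOfFin s.2)).det := by
  rw [det_one_add_eq_sum_det_submatrix, ← powerset_univ, sum_powerset, card_univ]
  refine sum_congr rfl fun k _ => ?_
  rw [sum_subtype _ fun s => mem_powersetCard_univ]
  refine sum_congr rfl fun s _ => ?_
  rw [← det_submatrix_equiv_self (s.1.orderIsoOfFin s.2).toEquiv]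
  rfl

theorem Matrix.det_mul_eq_sum_det_mul_det (A : Matrix (Fin k) ι R) (B : Matrix ι (Fin k) R) :
    (A * B).det = ∑ I : {s : Finset ι // s.card = k},
      (A.submatrix id (I.1.orderEmbOfFin I.2)).det *
        (B.submatrix (I.1.orderEmbOfFin I.2) id).det := by
  classical
  set f : (Fin k → ι) → R := fun r => (∏ j, A j (r j)) * (B.submatrix r id).det
  have hinjective : ∀ r, f r ≠ 0 → Function.Injective r := by
    intro r hr
    by_contra hr'
    obtain ⟨a, b, hab, hne⟩ : ∃ a b, r a = r b ∧ a ≠ b := by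
      simpa [Function.Injective] using hr'
    exact hr (by simp only [f]; rw [det_zero_of_row_eq hne (by ext; simp [hab]), mul_zero])
  rw [det_mul_eq_sum_prod_mul_det_submatrix_s2, ← sum_filter_of_ne fun r _ => hinjective r,
    sum_filter_injective_eq_sum_orderEmbOfFin_comp_perm]
  refine sum_congr rfl fun I _ => ?_
  rw [← det_transpose, det_apply, sum_mul]
  refine sum_congr rfl fun σ _ => ?_
  have hperm : B.submatrix (I.1.orderEmbOfFin I.2 ∘ σ) id =
      (B.submatrix (I.1.orderEmbOfFin I.2) id).submatrix σ id := rfl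
  simp only [f, hperm, det_permute, Units.smul_def, Function.comp_apply, transpose_apply,
    submatrix_apply, id, zsmul_eq_mul]
  ring

end Minors

/-- For `n × m` matrices `F, G` over a commutative ring,
`det(1 + Fᵀ G) = Σ_P det(F_P) det(G_P)`, summing over all patterns `P = (I, J)` of every size
`k = 0, 1, …, m`; the empty pattern contributes `1`. -/
theorem det_one_add_transpose_mul {R : Type*} [CommRing R] {n m : ℕ}
    (F G : Matrix (Fin n) (Fin m) R) :
    (1 + Fᵀ * G).det =
      ∑ k ∈ Finset.range (m + 1),
        ∑ I : {s : Finset (Fin n) // s.card = k}, ∑ J : {s : Finset (Fin m) // s.card = k},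
          F.minorOn I J * G.minorOn I J := by
  rw [det_one_add_eq_sum_det_submatrix_orderEmbOfFin, Fintype.card_fin]
  refine sum_congr rfl fun k _ => ?_
  rw [sum_comm]
  refine sum_congr rfl fun J _ => ?_
  have hsub : (Fᵀ * G).submatrix (J.1.orderEmbOfFin J.2) (J.1.orderEmbOfFin J.2) =
      (F.submatrix id (J.1.orderEmbOfFin J.2))ᵀ * G.submatrix id (J.1.orderEmbOfFin J.2) := by
    rw [submatrix_mul _ _ _ id _ Function.bijective_id, transpose_submatrix]
  rw [hsub, det_mul_eq_sum_det_mul_det]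
  refine sum_congr rfl fun I _ => ?_
  rw [submatrix_submatrix, ← transpose_submatrix, det_transpose]
  rfl
end

section
/- Power rule for pseudo-determinants: For any n×n complex matrix A and any natural number m, Det(A^m) = Det(A)^m; that is, the product of the nonzero roots (with multiplicity) of the characteristic polynomial of A^m equals the m-th power of the product of the nonzero roots (with multiplicity) of the characteristic polynomial of A. -/
open Matrix Polynomial

/-- The pseudo-determinant of a square complex matrix: the product of the nonzero roots,
counted with multiplicity, of its characteristic polynomial `det(x·I − A)`; it equals `1`
when all eigenvalues are zero. -/
noncomputable def PDet {ι : Type*} [Fintype ι] [DecidableEq ι] (A : Matrix ι ι ℂ) : ℂ :=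
  (A.charpoly.roots.filter (· ≠ 0)).prod

/-!
The eigenvalues of `A ^ m` are the `m`-th powers of those of `A`, with multiplicity. For `m > 0`
pick a primitive `m`-th root of unity `ζ` and, for each `y`, some `μ` with `μ ^ m = y`. Evaluating
`X ^ m - y = ∏ₖ (X - ζ ^ k μ)` at `A` and taking determinants gives
`det (A ^ m - y) = ∏ₖ ∏ᵢ (λᵢ - ζ ^ k μ) = ∏ᵢ (λᵢ ^ m - y)`, which determines the characteristic
polynomial of `A ^ m`. Since `λ ^ m ≠ 0 ↔ λ ≠ 0`, the nonzero eigenvalues of `A ^ m` are then the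
`m`-th powers of the nonzero eigenvalues of `A`.
-/

namespace Multiset

theorem prod_map_sub_eq_neg_one_pow_mul {R : Type*} [CommRing R] (s : Multiset R) (c : R) :
    (s.map (· - c)).prod = (-1) ^ card s * (s.map (c - ·)).prod := by
  rw [← card_map (c - ·) s, ← prod_map_neg, map_map]
  simp only [Function.comp_def, neg_sub]

theorem prod_filter_ne_zero_map_pow {M₀ : Type*} [CommMonoidWithZero M₀] [NoZeroDivisors M₀]
    [DecidableEq M₀] (s : Multiset M₀) (m : ℕ) :
    ((s.map (· ^ m)).filter (· ≠ 0)).prod = (s.filter (· ≠ 0)).prod ^ m := by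
  rcases m.eq_zero_or_pos with rfl | hm
  · refine (prod_eq_one fun x hx => ?_).trans (pow_zero _).symm
    obtain ⟨a, -, rfl⟩ := mem_map.1 (mem_of_mem_filter hx)
    exact pow_zero a
  · rw [filter_map, prod_map_pow, map_id']
    congr 2
    exact filter_congr fun x _ => pow_ne_zero_iff hm.ne'

end Multiset

namespace Matrix

variable {n : Type*} [Fintype n] [DecidableEq n]

theorem det_sub_scalar {R : Type*} [CommRing R] (A : Matrix n n R) (c : R) :
    det (A - scalar n c) = (-1) ^ Fintype.card n * A.charpoly.eval c := by
  rw [eval_charpoly, ← det_neg, neg_sub]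

theorem det_aeval_prod_X_sub_C {R ι : Type*} [CommRing R] (A : Matrix n n R) (s : Finset ι)
    (c : ι → R) : det (aeval A (∏ k ∈ s, (X - C (c k)))) = ∏ k ∈ s, det (A - scalar n (c k)) := by
  have aeval_X_sub_C (k : ι) : aeval A (X - C (c k)) = A - scalar n (c k) := by
    rw [map_sub, aeval_X, aeval_C]; rfl
  exact (map_prod (detMonoidHom.comp (aeval (R := R) A).toMonoidHom) _ s).trans <|
    Finset.prod_congr rfl fun k _ => congrArg det (aeval_X_sub_C k)

theorem charpoly_eq_prod_X_sub_C_of_det_sub_scalar {R : Type*} [CommRing R] [IsDomain R]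
    [Infinite R] {B : Matrix n n R} {s : Multiset R} (hs : Multiset.card s = Fintype.card n)
    (h : ∀ c, det (B - scalar n c) = (s.map (· - c)).prod) :
    B.charpoly = (s.map (X - C ·)).prod := by
  refine Polynomial.funext fun c =>
    mul_left_cancel₀ (pow_ne_zero (Fintype.card n) (neg_ne_zero.2 one_ne_zero)) ?_
  rw [← det_sub_scalar, h, Multiset.prod_map_sub_eq_neg_one_pow_mul, hs, eval_multiset_prod,
    Multiset.map_map]
  simp

variable {K : Type*} [Field K] [IsAlgClosed K]

theorem card_roots_charpoly (A : Matrix n n K) :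
    Multiset.card A.charpoly.roots = Fintype.card n := by
  rw [← (IsAlgClosed.splits A.charpoly).natDegree_eq_card_roots, charpoly_natDegree_eq_dim]

theorem det_sub_scalar_eq_prod_roots (A : Matrix n n K) (c : K) :
    det (A - scalar n c) = (A.charpoly.roots.map (· - c)).prod := by
  conv_lhs =>
    rw [det_sub_scalar, (IsAlgClosed.splits A.charpoly).eq_prod_roots_of_monic A.charpoly_monic]
  rw [Multiset.prod_map_sub_eq_neg_one_pow_mul, card_roots_charpoly, eval_multiset_prod,
    Multiset.map_map]
  simp

theorem charpoly_pow_eq_prod_X_sub_C_roots_pow {m : ℕ} {ζ : K} (hζ : IsPrimitiveRoot ζ m)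
    (hm : 0 < m) (A : Matrix n n K) :
    (A ^ m).charpoly = ((A.charpoly.roots.map (· ^ m)).map (X - C ·)).prod := by
  refine charpoly_eq_prod_X_sub_C_of_det_sub_scalar (by simp [card_roots_charpoly]) fun y => ?_
  obtain ⟨μ, rfl⟩ := IsAlgClosed.exists_pow_nat_eq y hm
  have hfactor := X_pow_sub_C_eq_prod hζ hm (rfl : μ ^ m = μ ^ m)
  calc det (A ^ m - scalar n (μ ^ m))
      = det (aeval A (X ^ m - C (μ ^ m))) := by rw [map_sub, aeval_X_pow, aeval_C]; rfl
    _ = ∏ k ∈ Finset.range m, det (A - scalar n (ζ ^ k * μ)) := by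
      rw [hfactor, det_aeval_prod_X_sub_C]
    _ = ∏ k ∈ Finset.range m, (A.charpoly.roots.map (· - ζ ^ k * μ)).prod := by
      simp only [det_sub_scalar_eq_prod_roots]
    _ = (A.charpoly.roots.map fun a => ∏ k ∈ Finset.range m, (a - ζ ^ k * μ)).prod :=
      Multiset.prod_map_prod_map _ _
    _ = ((A.charpoly.roots.map (· ^ m)).map (· - μ ^ m)).prod := by
      rw [Multiset.map_map]
      congr 1
      refine Multiset.map_congr rfl fun a _ => ?_
      simpa [eval_prod] using (congrArg (eval a) hfactor).symm

theorem roots_charpoly_pow (A : Matrix n n ℂ) (m : ℕ) :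
    (A ^ m).charpoly.roots = A.charpoly.roots.map (· ^ m) := by
  rcases m.eq_zero_or_pos with rfl | hm
  · rw [pow_zero, charpoly_one, ← C_1, roots_pow, roots_X_sub_C]
    simp [Multiset.nsmul_singleton, card_roots_charpoly]
  · rw [charpoly_pow_eq_prod_X_sub_C_roots_pow (Complex.isPrimitiveRoot_exp m hm.ne') hm,
      roots_multiset_prod_X_sub_C]

end Matrix

/-- Power rule for pseudo-determinants: for any `n × n` complex matrix `A` and any natural
number `m`, `Det(A^m) = Det(A)^m`. -/
theorem pdet_pow {n : ℕ} (A : Matrix (Fin n) (Fin n) ℂ) (m : ℕ) :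
    PDet (A ^ m) = (PDet A) ^ m := by
  rw [PDet, PDet, roots_charpoly_pow, Multiset.prod_filter_ne_zero_map_pow]
end

section
/- Chebotarev–Shamis forest theorem: Let G be a finite simple graph on a vertex set V and let L be its Laplacian matrix over ℝ. Then det(I + L) = Σ_H ∏_c |c|, where the sum runs over all acyclic simple graphs H on the vertex set V with H ≤ G (every edge of H is an edge of G), the product runs over the connected components c of H, and |c| denotes the number of vertices in the component c. Equivalently, det(I + L) is the number of rooted spanning forests of G, a rooted spanning forest being a spanning acyclic subgraph together with a choice of one root vertex in each of its connected components. -/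
/-!
Row `i` of `I + L` is `e_i + ∑_{w ~ i} (e_i - e_w)`, so expanding the determinant multilinearly
in the rows writes `det (I + L)` as a sum over all parent maps `f` (every vertex points to a
neighbour or to nothing) of `det (I - P_f)`, with `P_f` the 0/1 matrix of `f`. This determinant is
`1` when `f` has no directed cycle (ordered by depth, `I - P_f` is unitriangular) and `0` otherwise
(the rows along a cycle sum to zero). The undirected graph of an acyclic parent map is a forest
`H ≤ G` with exactly one root, i.e. vertex without parent, in each component; conversely, for each
choice of roots there is exactly one such orientation of `H`, sending every other vertex to its
neighbour closer to the root of its component. So each forest `H` is counted `∏_c |c|` times.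
-/

open Matrix Finset Relation

namespace SimpleGraph

variable {V : Type*} {H : SimpleGraph V}

theorem connectedComponentMk_out (c : H.ConnectedComponent) : H.connectedComponentMk c.out = c :=
  c.out_eq

theorem Reachable.exists_adj_dist_add_one_eq {t v : V} (hr : H.Reachable t v) (hne : t ≠ v) :
    ∃ w, H.Adj v w ∧ H.dist t w + 1 = H.dist t v := by
  obtain ⟨p, hp⟩ := hr.symm.exists_walk_length_eq_dist
  cases p with
  | nil => exact absurd rfl hne
  | @cons _ w _ hadj q =>
    refine ⟨w, hadj, le_antisymm ?_ ?_⟩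
    · rw [dist_comm (u := t), dist_comm (u := t), ← hp, Walk.length_cons]
      exact Nat.succ_le_succ (dist_le q)
    · have := hadj.symm.reachable.dist_triangle_right t
      rwa [dist_eq_one_iff_adj.2 hadj.symm] at this

theorem IsAcyclic.eq_of_adj_of_dist_add_one_eq (hH : H.IsAcyclic) {t v w₁ w₂ : V}
    (h₁ : H.Adj v w₁) (h₂ : H.Adj v w₂) (hd₁ : H.dist t w₁ + 1 = H.dist t v)
    (hd₂ : H.dist t w₂ + 1 = H.dist t v) : w₁ = w₂ := by
  have shortest_path : ∀ w (h : H.Adj v w), H.dist t w + 1 = H.dist t v →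
      ∃ p : H.Path v t, p.1.snd = w := by
    intro w h hd
    have hwt : H.Reachable w t :=
      ((Reachable.of_dist_ne_zero (by omega : H.dist t v ≠ 0)).trans h.reachable).symm
    obtain ⟨q, hq⟩ := hwt.exists_walk_length_eq_dist
    refine ⟨⟨.cons h q, (Walk.cons h q).isPath_of_length_eq_dist ?_⟩, by simp⟩
    rw [Walk.length_cons, hq, dist_comm, hd, dist_comm]
  obtain ⟨p₁, rfl⟩ := shortest_path w₁ h₁ hd₁
  obtain ⟨p₂, rfl⟩ := shortest_path _ h₂ hd₂
  rw [(hH.subsingleton_path v t).elim p₁ p₂]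

end SimpleGraph

/-- `f v = some w` says that `w` is the parent of `v`; the vertices with `f v = none` are roots. -/
abbrev ParentMap (V : Type*) := V → Option V

namespace ParentMap

variable {V : Type*} (f : ParentMap V)

def Rel (v w : V) : Prop := f v = some w

def IsAcyclic : Prop := ∀ v, ¬ TransGen f.Rel v v

def graph : SimpleGraph V := SimpleGraph.fromRel f.Rel

def matrix (R : Type*) [Zero R] [One R] [DecidableEq V] : Matrix V V R :=
  of fun i j => if f i = some j then 1 else 0

noncomputable def depth (v : V) : ℕ := {u | TransGen f.Rel v u}.ncard

variable {f}

theorem rel_rightUnique : Relator.RightUnique f.Rel := fun _ _ _ hab hac =>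
  Option.some_injective _ (hab.symm.trans hac)

theorem eq_of_reflTransGen_of_eq_none {v w : V} (h : ReflTransGen f.Rel v w) (hv : f v = none) :
    v = w := by
  rcases h.cases_head with h | ⟨c, hc, -⟩
  · exact h
  · simp [Rel, hv] at hc

theorem depth_lt_depth [Finite V] (hf : f.IsAcyclic) {v w : V} (h : f v = some w) :
    f.depth w < f.depth v :=
  Set.ncard_lt_ncard <| Set.ssubset_iff_exists.2
    ⟨fun _ hu => TransGen.head h hu, w, TransGen.single h, hf w⟩

theorem wellFounded_flip_rel [Finite V] (hf : f.IsAcyclic) : WellFounded (flip f.Rel) :=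
  Subrelation.wf (fun h => depth_lt_depth hf h) (measure f.depth).wf

theorem isAcyclic_of_lt (d : V → ℕ) (hd : ∀ v w, f v = some w → d w < d v) :
    f.IsAcyclic := by
  have decreasing : ∀ a b, TransGen f.Rel a b → d b < d a := by
    intro a b hab
    induction hab with
    | single h => exact hd _ _ h
    | tail _ h ih => exact (hd _ _ h).trans ih
  exact fun v hv => lt_irrefl _ (decreasing v v hv)

section Matrix

variable {R : Type*} [CommRing R] [DecidableEq V] [Fintype V]

theorem single_vecMul_one_sub_matrix {v w : V} (h : f v = some w) :
    Pi.single v 1 ᵥ* (1 - f.matrix R) = Pi.single v 1 - Pi.single w 1 := by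
  ext j
  simp [vecMul, dotProduct, Pi.single_apply, matrix, h, one_apply, eq_comm]

theorem exists_natCast_vecMul_one_sub_matrix {a b : V} (h : TransGen f.Rel a b) :
    ∃ u : V → ℕ, u a ≠ 0 ∧
      (fun i => (u i : R)) ᵥ* (1 - f.matrix R) = Pi.single a 1 - Pi.single b 1 := by
  induction h with
  | single h =>
    refine ⟨Pi.single a 1, by simp, ?_⟩
    rw [← single_vecMul_one_sub_matrix h]
    congr 1
    ext i
    by_cases hi : i = a <;> simp [hi]
  | @tail b c _ h ih =>
    obtain ⟨u, hu, hvec⟩ := ih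
    refine ⟨u + Pi.single b 1, by simp [hu], ?_⟩
    have hcast : (fun i => ((u + Pi.single b 1 : V → ℕ) i : R)) =
        (fun i => (u i : R)) + Pi.single b 1 := by
      ext i
      by_cases hi : i = b <;> simp [hi]
    rw [hcast, add_vecMul, hvec, single_vecMul_one_sub_matrix h]
    abel

theorem det_one_sub_matrix_of_not_isAcyclic [IsDomain R] [CharZero R] (hf : ¬ f.IsAcyclic) :
    (1 - f.matrix R).det = 0 := by
  obtain ⟨v, hv⟩ := not_forall_not.1 hf
  obtain ⟨u, hu, hvec⟩ := exists_natCast_vecMul_one_sub_matrix (R := R) hv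
  refine exists_vecMul_eq_zero_iff.1 ⟨_, fun h => hu ?_, by simpa using hvec⟩
  simpa using congrFun h v

theorem det_one_sub_matrix_of_isAcyclic (hf : f.IsAcyclic) : (1 - f.matrix R).det = 1 := by
  have hblock : (1 - f.matrix R)ᵀ.BlockTriangular f.depth := by
    intro i j hij
    have hne : i ≠ j := by rintro rfl; exact lt_irrefl _ hij
    have : f j ≠ some i := fun h => (depth_lt_depth hf h).not_gt hij
    simp [matrix, one_apply, hne.symm, this]
  rw [← det_transpose, hblock.det]
  refine Finset.prod_eq_one fun d _ => ?_
  have hdiag : (1 - f.matrix R)ᵀ.toSquareBlock f.depth d = 1 := by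
    ext ⟨i, hi⟩ ⟨j, hj⟩
    have : f j ≠ some i := fun h => (depth_lt_depth hf h).ne (hi.trans hj.symm)
    simp [toSquareBlock_def, matrix, one_apply, this]
  rw [hdiag, det_one]

open scoped Classical in
theorem det_one_sub_matrix [IsDomain R] [CharZero R] :
    (1 - f.matrix R).det = if f.IsAcyclic then 1 else 0 := by
  split_ifs with hf
  · exact det_one_sub_matrix_of_isAcyclic hf
  · exact det_one_sub_matrix_of_not_isAcyclic hf

end Matrix

theorem graph_adj {v w : V} : f.graph.Adj v w ↔ v ≠ w ∧ (f v = some w ∨ f w = some v) :=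
  SimpleGraph.fromRel_adj _ _ _

theorem reachable_of_reflTransGen {v w : V} (h : ReflTransGen f.Rel v w) :
    f.graph.Reachable v w := by
  induction h with
  | refl => rfl
  | @tail b c _ hbc ih =>
    by_cases hne : b = c
    · exact hne ▸ ih
    · exact ih.trans (graph_adj.2 ⟨hne, .inl hbc⟩).reachable

theorem IsAcyclic.graph_adj_of_eq_some (hf : f.IsAcyclic) {v w : V} (h : f v = some w) :
    f.graph.Adj v w :=
  graph_adj.2 ⟨fun hvw => hf v (.single (hvw ▸ h)), .inl h⟩

theorem IsAcyclic.graph_le_iff (G : SimpleGraph V) (hf : f.IsAcyclic) :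
    f.graph ≤ G ↔ ∀ v w, f v = some w → G.Adj v w := by
  refine ⟨fun hle v w h => hle (hf.graph_adj_of_eq_some h), fun h a b hab => ?_⟩
  rcases (graph_adj.1 hab).2 with hab | hba
  · exact h a b hab
  · exact (h b a hba).symm

/-- Without the edge from `v` to its parent `w`, only descendants of `v` are reachable from `v`,
and `w` is not one of them. -/
theorem IsAcyclic.isBridge_graph (hf : f.IsAcyclic) {v w : V} (h : f v = some w) :
    f.graph.IsBridge s(v, w) := by
  have descendant : ∀ u, ReflTransGen (f.graph.deleteEdges {s(v, w)}).Adj v u →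
      ReflTransGen f.Rel u v := by
    intro u hu
    induction hu with
    | refl => rfl
    | @tail b c _ hbc ih =>
      obtain ⟨hadj, hvw⟩ := SimpleGraph.deleteEdges_adj.1 hbc
      rcases (graph_adj.1 hadj).2 with hb | hc
      · rcases ih.cases_head with rfl | ⟨d, hd, hdv⟩
        · obtain rfl : c = w := Option.some_injective _ (hb.symm.trans h)
          simp at hvw
        · exact (Option.some_injective _ (hb.symm.trans hd)) ▸ hdv
      · exact .head hc ih
  intro hreach
  exact hf v (.head' h (descendant w ((SimpleGraph.reachable_iff_reflTransGen _ _).1 hreach)))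

theorem IsAcyclic.isAcyclic_graph (hf : f.IsAcyclic) : f.graph.IsAcyclic := by
  refine SimpleGraph.isAcyclic_iff_forall_adj_isBridge.2 fun v w hadj => ?_
  rcases (graph_adj.1 hadj).2 with h | h
  · exact hf.isBridge_graph h
  · exact Sym2.eq_swap ▸ hf.isBridge_graph h

section Root

variable [Finite V]

theorem IsAcyclic.exists_root (hf : f.IsAcyclic) (v : V) :
    ∃ ρ, f ρ = none ∧ ReflTransGen f.Rel v ρ := by
  induction v using (wellFounded_flip_rel hf).induction with
  | _ v ih =>
  cases hv : f v with
  | none => exact ⟨v, hv, .refl⟩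
  | some w =>
    obtain ⟨ρ, hρ, hwρ⟩ := ih w hv
    exact ⟨ρ, hρ, .head hv hwρ⟩

noncomputable def IsAcyclic.root (hf : f.IsAcyclic) (v : V) : V := (hf.exists_root v).choose

theorem IsAcyclic.root_eq_none (hf : f.IsAcyclic) (v : V) : f (hf.root v) = none :=
  (hf.exists_root v).choose_spec.1

theorem IsAcyclic.reflTransGen_root (hf : f.IsAcyclic) (v : V) :
    ReflTransGen f.Rel v (hf.root v) :=
  (hf.exists_root v).choose_spec.2

theorem IsAcyclic.root_eq (hf : f.IsAcyclic) {v ρ : V} (hρ : f ρ = none)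
    (h : ReflTransGen f.Rel v ρ) : hf.root v = ρ := by
  rcases ReflTransGen.total_of_right_unique rel_rightUnique (hf.reflTransGen_root v) h with h' | h'
  · exact eq_of_reflTransGen_of_eq_none h' (hf.root_eq_none v)
  · exact (eq_of_reflTransGen_of_eq_none h' hρ).symm

theorem IsAcyclic.root_eq_self (hf : f.IsAcyclic) {v : V} (h : f v = none) : hf.root v = v :=
  hf.root_eq h .refl

theorem IsAcyclic.root_eq_root (hf : f.IsAcyclic) {v w : V} (h : f v = some w) :
    hf.root v = hf.root w :=
  hf.root_eq (hf.root_eq_none w) (.head h (hf.reflTransGen_root w))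

theorem IsAcyclic.root_eq_root_of_reachable (hf : f.IsAcyclic) {u v : V}
    (h : f.graph.Reachable u v) : hf.root u = hf.root v := by
  obtain ⟨p⟩ := h
  induction p with
  | nil => rfl
  | cons hadj _ ih =>
    rcases (graph_adj.1 hadj).2 with h | h
    · exact (hf.root_eq_root h).trans ih
    · exact (hf.root_eq_root h).symm.trans ih

theorem IsAcyclic.reachable_root (hf : f.IsAcyclic) (v : V) : f.graph.Reachable v (hf.root v) :=
  reachable_of_reflTransGen (hf.reflTransGen_root v)

theorem IsAcyclic.connectedComponentMk_root (hf : f.IsAcyclic) (v : V) :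
    f.graph.connectedComponentMk (hf.root v) = f.graph.connectedComponentMk v :=
  (SimpleGraph.ConnectedComponent.sound (hf.reachable_root v)).symm

/-- If `v` were farther from the root than its parent `w`, then `w` would have two neighbours
closer to the root, `v` and its own parent; in a forest they coincide, giving a 2-cycle. -/
theorem IsAcyclic.dist_root_add_one (hf : f.IsAcyclic) {v w : V} (h : f v = some w) :
    f.graph.dist (hf.root v) w + 1 = f.graph.dist (hf.root v) v := by
  induction v using (wellFounded_flip_rel hf).induction generalizing w with
  | _ v ih =>
  have hadj := hf.graph_adj_of_eq_some h
  rcases hf.isAcyclic_graph.dist_eq_dist_add_one_of_adj_of_reachable _ hadj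
    (hf.reachable_root v).symm with hd | hd
  · exact hd.symm
  rw [hf.root_eq_root h] at hd ⊢
  cases hw : f w with
  | none => simp [hf.root_eq_self hw] at hd
  | some u =>
    obtain rfl : v = u := hf.isAcyclic_graph.eq_of_adj_of_dist_add_one_eq hadj.symm
      (hf.graph_adj_of_eq_some hw) hd.symm (ih w h hw)
    exact (hf v (.head h (.single hw))).elim

end Root

end ParentMap

namespace SimpleGraph

variable {V : Type*} {H : SimpleGraph V}

section OrientTowards

variable {r : (c : H.ConnectedComponent) → c.supp}

open scoped Classical in
noncomputable def orientTowards (H : SimpleGraph V) (r : (c : H.ConnectedComponent) → c.supp) :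
    ParentMap V := fun v =>
  if h : ∃ w, H.Adj v w ∧
      H.dist (r (H.connectedComponentMk v)) w + 1 = H.dist (r (H.connectedComponentMk v)) v
  then some h.choose else none

theorem reachable_connectedComponent_root (v : V) :
    H.Reachable (r (H.connectedComponentMk v)) v :=
  ConnectedComponent.exact (r _).2

theorem orientTowards_eq_some {v w : V} (h : H.orientTowards r v = some w) :
    H.Adj v w ∧
      H.dist (r (H.connectedComponentMk v)) w + 1 = H.dist (r (H.connectedComponentMk v)) v := by
  unfold orientTowards at h
  split_ifs at h with hex
  exact Option.some_injective _ h ▸ hex.choose_spec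

theorem IsAcyclic.orientTowards_eq_some_iff (hH : H.IsAcyclic) {v w : V} :
    H.orientTowards r v = some w ↔ H.Adj v w ∧
      H.dist (r (H.connectedComponentMk v)) w + 1 = H.dist (r (H.connectedComponentMk v)) v := by
  refine ⟨orientTowards_eq_some, fun hw => ?_⟩
  have hex : ∃ w, H.Adj v w ∧
      H.dist (r (H.connectedComponentMk v)) w + 1 = H.dist (r (H.connectedComponentMk v)) v :=
    ⟨w, hw⟩
  rw [orientTowards, dif_pos hex]
  exact congrArg some (hH.eq_of_adj_of_dist_add_one_eq hex.choose_spec.1 hw.1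
    hex.choose_spec.2 hw.2)

theorem orientTowards_eq_none_iff {v : V} :
    H.orientTowards r v = none ↔ v = r (H.connectedComponentMk v) := by
  constructor
  · intro h
    by_contra hne
    obtain ⟨w, hw⟩ :=
      (reachable_connectedComponent_root v).exists_adj_dist_add_one_eq (Ne.symm hne)
    rw [orientTowards, dif_pos ⟨w, hw⟩] at h
    cases h
  · intro h
    have : H.dist (r (H.connectedComponentMk v)) v = 0 := by rw [← h, dist_self]
    rw [orientTowards, dif_neg]
    rintro ⟨w, -, hw⟩
    omega

theorem isAcyclic_orientTowards : (H.orientTowards r).IsAcyclic := by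
  refine ParentMap.isAcyclic_of_lt (fun v => H.dist (r (H.connectedComponentMk v)) v)
    fun v w h => ?_
  obtain ⟨hadj, hd⟩ := orientTowards_eq_some h
  show H.dist (r (H.connectedComponentMk w)) w < H.dist (r (H.connectedComponentMk v)) v
  rw [← ConnectedComponent.connectedComponentMk_eq_of_adj hadj]
  omega

theorem graph_orientTowards_le : (H.orientTowards r).graph ≤ H := by
  intro a b hab
  rcases (ParentMap.graph_adj.1 hab).2 with h | h
  · exact (orientTowards_eq_some h).1
  · exact (orientTowards_eq_some h).1.symm

theorem IsAcyclic.graph_orientTowards (hH : H.IsAcyclic) : (H.orientTowards r).graph = H := by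
  refine le_antisymm graph_orientTowards_le fun a b hadj => ParentMap.graph_adj.2 ⟨hadj.ne, ?_⟩
  rcases hH.dist_eq_dist_add_one_of_adj_of_reachable _ hadj
    (reachable_connectedComponent_root a) with hd | hd
  · exact .inl (hH.orientTowards_eq_some_iff.2 ⟨hadj, hd.symm⟩)
  · refine .inr (hH.orientTowards_eq_some_iff.2 ⟨hadj.symm, ?_⟩)
    rw [← ConnectedComponent.connectedComponentMk_eq_of_adj hadj]
    exact hd.symm

theorem root_orientTowards [Finite V] (v : V) :
    (isAcyclic_orientTowards (r := r)).root v = r (H.connectedComponentMk v) := by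
  have hroot := orientTowards_eq_none_iff.1 ((isAcyclic_orientTowards (r := r)).root_eq_none v)
  have hreach := ((isAcyclic_orientTowards (r := r)).reachable_root v).mono graph_orientTowards_le
  rwa [← ConnectedComponent.sound hreach] at hroot

end OrientTowards

theorem IsAcyclic.orientTowards_eq [Finite V] (hH : H.IsAcyclic)
    {r : (c : H.ConnectedComponent) → c.supp} {f : ParentMap V} (hf : f.IsAcyclic)
    (hfH : f.graph = H) (hr : ∀ v, (r (H.connectedComponentMk v) : V) = hf.root v) :
    H.orientTowards r = f := by
  subst hfH
  funext v
  cases hv : f v with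
  | none => exact orientTowards_eq_none_iff.2 (by rw [hr, hf.root_eq_self hv])
  | some w =>
    refine hH.orientTowards_eq_some_iff.2 ⟨hf.graph_adj_of_eq_some hv, ?_⟩
    rw [hr]
    exact hf.dist_root_add_one hv

noncomputable def IsAcyclic.parentMapEquiv [Finite V] (hH : H.IsAcyclic) :
    {f : ParentMap V // f.IsAcyclic ∧ f.graph = H} ≃ ((c : H.ConnectedComponent) → c.supp)
    where
  toFun f c := ⟨f.2.1.root c.out, by
    obtain ⟨f, hf, rfl⟩ := f
    rw [ConnectedComponent.mem_supp_iff, hf.connectedComponentMk_root, connectedComponentMk_out]⟩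
  invFun r := ⟨H.orientTowards r, isAcyclic_orientTowards, hH.graph_orientTowards⟩
  left_inv := by
    rintro ⟨f, hf, rfl⟩
    refine Subtype.ext ?_
    dsimp only
    exact hH.orientTowards_eq hf rfl fun v =>
      hf.root_eq_root_of_reachable (ConnectedComponent.exact (connectedComponentMk_out _))
  right_inv r := funext fun c => Subtype.ext <| by
    show (isAcyclic_orientTowards (r := r)).root c.out = r c
    rw [root_orientTowards, connectedComponentMk_out]

open scoped Classical in
theorem IsAcyclic.card_parentMap [Fintype V] (hH : H.IsAcyclic) :
    Nat.card {f : ParentMap V // f.IsAcyclic ∧ f.graph = H} =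
      ∏ c : H.ConnectedComponent, c.supp.ncard := by
  rw [Nat.card_congr hH.parentMapEquiv, Nat.card_pi]
  simp only [Nat.card_coe_set_eq]

variable [Fintype V] [DecidableEq V] (G : SimpleGraph V) [DecidableRel G.Adj]

theorem det_one_add_lapMatrix_eq_sum {R : Type*} [CommRing R] :
    (1 + G.lapMatrix R).det =
      ∑ f : ParentMap V with ∀ v w, f v = some w → G.Adj v w, (1 - f.matrix R).det := by
  have hrows : 1 + G.lapMatrix R =
      of fun i => ∑ o ∈ insert none ((G.neighborFinset i).map .some),
        fun j => (1 : Matrix V V R) i j - if o = some j then 1 else 0 := by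
    ext i j
    by_cases hij : i = j
    · subst hij
      simp [lapMatrix, degMatrix, one_apply]
    · simp [lapMatrix, degMatrix, one_apply, hij]
  have hchoices : Fintype.piFinset (fun i => insert none ((G.neighborFinset i).map .some)) =
      ({f | ∀ v w, f v = some w → G.Adj v w} : Finset (ParentMap V)) := by
    ext f
    simp only [Fintype.mem_piFinset, mem_filter, mem_univ, true_and]
    refine forall_congr' fun v => ?_
    cases f v <;> simp
  rw [hrows, ← hchoices]
  exact (detRowAlternating (R := R) (n := V)).toMultilinearMap.map_sum_finset _ _

open scoped Classical in
theorem card_isAcyclic_parentMap :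
    #{f : ParentMap V | (∀ v w, f v = some w → G.Adj v w) ∧ f.IsAcyclic} =
      ∑ H with H ≤ G ∧ H.IsAcyclic, ∏ c : H.ConnectedComponent, c.supp.ncard := by
  rw [card_eq_sum_card_fiberwise (f := ParentMap.graph) (t := {H | H ≤ G ∧ H.IsAcyclic})]
  swap
  · intro f hf
    simp only [coe_filter, mem_univ, true_and, Set.mem_ofPred_eq] at hf ⊢
    exact ⟨(hf.2.graph_le_iff G).2 hf.1, hf.2.isAcyclic_graph⟩
  refine sum_congr rfl fun H hH => ?_
  obtain ⟨hHG, hH⟩ := (mem_filter.1 hH).2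
  calc _ = Nat.card {f : ParentMap V // f.IsAcyclic ∧ f.graph = H} := by
        rw [Nat.card_eq_fintype_card, Fintype.card_subtype]
        congr 1
        ext f
        simp only [mem_filter, mem_univ, true_and]
        constructor
        · exact fun ⟨⟨_, hf⟩, hfH⟩ => ⟨hf, hfH⟩
        · rintro ⟨hf, rfl⟩
          exact ⟨⟨(hf.graph_le_iff G).1 hHG, hf⟩, rfl⟩
    _ = _ := by convert hH.card_parentMap

end SimpleGraph

open scoped Classical in
/-- Chebotarev–Shamis forest theorem: for a finite simple graph `G` on a vertex set `V` with
Laplacian matrix `L` over `ℝ`, `det(I + L) = Σ_H Π_c |c|`, where `H` runs over all acyclic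
simple graphs on `V` with `H ≤ G`, `c` runs over the connected components of `H`, and `|c|`
is the number of vertices of the component `c`. Equivalently, `det(I + L)` is the number of
rooted spanning forests of `G`. -/
theorem chebotarev_shamis_forest {V : Type*} [Fintype V] [DecidableEq V] (G : SimpleGraph V)
    [DecidableRel G.Adj] :
    (1 + G.lapMatrix ℝ).det =
      ∑ H ∈ Finset.univ.filter (fun H : SimpleGraph V => H ≤ G ∧ H.IsAcyclic),
        ∏ c : H.ConnectedComponent, (c.supp.ncard : ℝ) := by
  simp only [G.det_one_add_lapMatrix_eq_sum, ParentMap.det_one_sub_matrix, sum_boole,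
    filter_filter]
  exact_mod_cast G.card_isAcyclic_parentMap
end

section
/- Appending linear combinations of rows (row-reduction lemma): Let F and G be real n×m matrices and let λ, μ ∈ ℝ^m. Let A be the n×(m+1) matrix obtained from F by appending the column F·λ (the linear combination of the columns of F with coefficients λ), and let B be obtained from G by appending the column G·μ. Then (−1)^m times the coefficient of x^1 in the characteristic polynomial det(x·I − AᵀB) of the (m+1)×(m+1) matrix AᵀB equals (1 + λ·μ)·det(FᵀG), where λ·μ = Σ_{j=1}^m λ_j μ_j. In particular, appending λ times the l-th row of Fᵀ to Fᵀ and μ times the l-th row of Gᵀ to Gᵀ multiplies the pseudo-determinant Det(FᵀG) by the factor 1 + λμ. -/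
/-!
Writing `C = [1 | lam]` and `D = [1 | mu]`, we have `A = F C` and `B = G D`, so
`Aᵀ B = (Cᵀ Fᵀ G) D`. Since `χ(P Q) = X · χ(Q P)` for an `(m+1) × m` matrix `P`, the
coefficient of `x` in the characteristic polynomial of `Aᵀ B` is, up to sign,
`det (D Cᵀ Fᵀ G)`. Finally
`D Cᵀ = 1 + mu lamᵀ`, whose determinant is `1 + lam ⬝ᵥ mu` by the matrix determinant lemma.
-/

open Matrix Polynomial

namespace Matrix

variable {R : Type*} [CommRing R]

/-- The block matrix `[1 | v]`. -/
def oneSnocCol {m : ℕ} (v : Fin m → R) : Matrix (Fin m) (Fin (m + 1)) R :=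
  of fun k => Fin.snoc ((1 : Matrix (Fin m) (Fin m) R) k) (v k)

theorem mul_oneSnocCol {ι : Type*} {m : ℕ} (M : Matrix ι (Fin m) R) (v : Fin m → R) (i : ι) :
    (M * oneSnocCol v) i = Fin.snoc (M i) ((M *ᵥ v) i) := by
  funext j
  refine Fin.lastCases ?_ (fun j ↦ ?_) j
  · simp [oneSnocCol, mul_apply, mulVec, dotProduct]
  · simp [oneSnocCol, mul_apply, one_apply]

theorem oneSnocCol_mul_transpose {m : ℕ} (u v : Fin m → R) :
    oneSnocCol u * (oneSnocCol v)ᵀ = 1 + replicateCol Unit u * replicateRow Unit v := by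
  ext k l
  simp [oneSnocCol, mul_apply, Fin.sum_univ_castSucc, one_apply]

theorem charpoly_coeff_one_mul_of_card_eq_succ {m n : Type*} [Fintype m] [DecidableEq m]
    [Fintype n] [DecidableEq n] (A : Matrix m n R) (B : Matrix n m R)
    (h : Fintype.card m = Fintype.card n + 1) :
    (A * B).charpoly.coeff 1 = (-1) ^ Fintype.card n * (B * A).det := by
  rw [charpoly_mul_comm_of_le A B (by omega), h, Nat.add_sub_cancel_left, pow_one, coeff_X_mul,
    det_eq_sign_charpoly_coeff, ← mul_assoc, ← pow_add, Even.neg_one_pow ⟨_, rfl⟩, one_mul]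

end Matrix

/-- Appending linear combinations of rows (row-reduction lemma): let `F, G` be real `n × m`
matrices and `lam, mu ∈ ℝ^m`. Let `A` be the `n × (m+1)` matrix obtained from `F` by appending
the column `F·lam` (the linear combination of the columns of `F` with coefficients `lam`), and
let `B` be obtained from `G` by appending the column `G·mu`. Then `(-1)^m` times the
coefficient of `x^1` in the characteristic polynomial `det(x·I − AᵀB)` of the
`(m+1) × (m+1)` matrix `AᵀB` equals `(1 + lam·mu) · det(Fᵀ G)`. -/
theorem append_row_combination_pdet {n m : ℕ} (F G : Matrix (Fin n) (Fin m) ℝ)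
    (lam mu : Fin m → ℝ)
    (A : Matrix (Fin n) (Fin (m + 1)) ℝ) (hA : ∀ i, A i = Fin.snoc (F i) (F.mulVec lam i))
    (B : Matrix (Fin n) (Fin (m + 1)) ℝ) (hB : ∀ i, B i = Fin.snoc (G i) (G.mulVec mu i)) :
    (-1 : ℝ) ^ m * (Aᵀ * B).charpoly.coeff 1 = (1 + lam ⬝ᵥ mu) * (Fᵀ * G).det := by
  have hAF : A = F * oneSnocCol lam := funext fun i ↦ by rw [hA, mul_oneSnocCol]
  have hBG : B = G * oneSnocCol mu := funext fun i ↦ by rw [hB, mul_oneSnocCol]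
  have hAB : Aᵀ * B = ((oneSnocCol lam)ᵀ * (Fᵀ * G)) * oneSnocCol mu := by
    rw [hAF, hBG, transpose_mul, Matrix.mul_assoc, Matrix.mul_assoc, Matrix.mul_assoc]
  rw [hAB, charpoly_coeff_one_mul_of_card_eq_succ _ _ (by simp), Fintype.card_fin,
    ← mul_assoc, ← pow_add, Even.neg_one_pow ⟨_, rfl⟩, one_mul, ← Matrix.mul_assoc,
    oneSnocCol_mul_transpose, det_mul, det_one_add_replicateCol_mul_replicateRow]
end
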